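/- arXiv:1210.6126 — 3 statements merged into one kernel-verified Lean document; each statement's English description precedes it below -/
import Mathlib

section
/- Let (c_n) and (d_n) be sequences of real numbers with d_n > 0 for all n, and suppose c_n/d_n is strictly decreasing in n. If f(x) = Σ c_n x^n and g(x) = Σ d_n x^n both converge for |x| < r (r > 0), then the function h(x) = f(x)/g(x) is strictly decreasing on (0, r). -/
/-!
For `0 < x < y` the claim is `f(y) g(x) < f(x) g(y)`. Expanding both products as double series,
`f(x) g(y) - f(y) g(x) = ∑_{m,n} c_m d_n (x^m y^n - y^m x^n)`, and pairing the `(m, n)` term with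
the `(n, m)` term gives `(c_m d_n - c_n d_m) (x^m y^n - x^n y^m)`: for `m < n` both factors are
positive, since `c_n / d_n < c_m / d_m` and `(y / x)^(n - m) > 1`.
-/

theorem tsum_pos_of_add_swap {α : Type*} {B : α × α → ℝ} (hB : Summable B)
    (hnonneg : ∀ p : α × α, 0 ≤ B p + B p.swap) {p₀ : α × α} (hp₀ : 0 < B p₀ + B p₀.swap) :
    0 < ∑' p, B p := by
  have hpos : 0 < ∑' p : α × α, (B p + B p.swap) :=
    (hB.add hB.prod_symm).tsum_pos hnonneg p₀ hp₀
  have hswap : ∑' p : α × α, B p.swap = ∑' p, B p := (Equiv.prodComm α α).tsum_eq B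
  rw [hB.tsum_add hB.prod_symm, hswap] at hpos
  linarith

theorem pow_mul_pow_lt_pow_mul_pow {R : Type*} [CommSemiring R] [PartialOrder R]
    [IsStrictOrderedRing R] {x y : R} (hx : 0 < x) (hxy : x < y) {m n : ℕ} (hmn : m < n) :
    x ^ n * y ^ m < x ^ m * y ^ n := by
  obtain ⟨k, rfl⟩ := Nat.exists_eq_add_of_lt hmn
  have hpow : x ^ (k + 1) < y ^ (k + 1) := pow_lt_pow_left₀ hxy hx.le k.succ_ne_zero
  calc x ^ (m + k + 1) * y ^ m = x ^ m * y ^ m * x ^ (k + 1) := by ring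
    _ < x ^ m * y ^ m * y ^ (k + 1) :=
      mul_lt_mul_of_pos_left hpow (mul_pos (pow_pos hx m) (pow_pos (hx.trans hxy) m))
    _ = x ^ m * y ^ (m + k + 1) := by ring

section RatioOfPowerSeries

variable {c d : ℕ → ℝ} {x y : ℝ}

theorem cross_term_pos (hd : ∀ n, 0 < d n) (hmono : StrictAnti fun n => c n / d n)
    (hx : 0 < x) (hxy : x < y) {m n : ℕ} (hmn : m < n) :
    0 < (c m * d n - c n * d m) * (x ^ m * y ^ n - x ^ n * y ^ m) := by
  have hcd : c n * d m < c m * d n := (div_lt_div_iff₀ (hd n) (hd m)).mp (hmono hmn)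
  exact mul_pos (sub_pos.mpr hcd) (sub_pos.mpr (pow_mul_pow_lt_pow_mul_pow hx hxy hmn))

theorem cross_term_nonneg (hd : ∀ n, 0 < d n) (hmono : StrictAnti fun n => c n / d n)
    (hx : 0 < x) (hxy : x < y) (m n : ℕ) :
    0 ≤ (c m * d n - c n * d m) * (x ^ m * y ^ n - x ^ n * y ^ m) := by
  rcases lt_trichotomy m n with hmn | rfl | hnm
  · exact (cross_term_pos hd hmono hx hxy hmn).le
  · simp
  · have h := cross_term_pos hd hmono hx hxy hnm
    nlinarith

theorem tsum_mul_tsum_lt_of_strictAnti_div (hd : ∀ n, 0 < d n)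
    (hmono : StrictAnti fun n => c n / d n) (hx : 0 < x) (hxy : x < y)
    (hcx : Summable fun n => c n * x ^ n) (hcy : Summable fun n => c n * y ^ n)
    (hdx : Summable fun n => d n * x ^ n) (hdy : Summable fun n => d n * y ^ n) :
    (∑' n, c n * y ^ n) * (∑' n, d n * x ^ n) < (∑' n, c n * x ^ n) * (∑' n, d n * y ^ n) := by
  have hcx' := summable_norm_iff.mpr hcx
  have hcy' := summable_norm_iff.mpr hcy
  have hdx' := summable_norm_iff.mpr hdx
  have hdy' := summable_norm_iff.mpr hdy
  have hxy_prod := summable_mul_of_summable_norm hcx' hdy'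
  have hyx_prod := summable_mul_of_summable_norm hcy' hdx'
  rw [tsum_mul_tsum_of_summable_norm hcx' hdy', tsum_mul_tsum_of_summable_norm hcy' hdx',
    ← sub_pos, ← hxy_prod.tsum_sub hyx_prod]
  have hpair : ∀ m n : ℕ, c m * x ^ m * (d n * y ^ n) - c m * y ^ m * (d n * x ^ n)
      + (c n * x ^ n * (d m * y ^ m) - c n * y ^ n * (d m * x ^ m))
      = (c m * d n - c n * d m) * (x ^ m * y ^ n - x ^ n * y ^ m) := fun m n => by ring
  refine tsum_pos_of_add_swap (hxy_prod.sub hyx_prod) (fun p => ?_) (p₀ := (0, 1)) ?_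
  · rw [Prod.fst_swap, Prod.snd_swap, hpair]
    exact cross_term_nonneg hd hmono hx hxy p.1 p.2
  · rw [Prod.fst_swap, Prod.snd_swap, hpair]
    exact cross_term_pos hd hmono hx hxy one_pos

end RatioOfPowerSeries

theorem stmt_5_general (c d : ℕ → ℝ) (r : ℝ)
    (hd : ∀ n, 0 < d n)
    (hmono : StrictAnti (fun n => c n / d n))
    (hf : ∀ x : ℝ, |x| < r → Summable (fun n => c n * x ^ n))
    (hg : ∀ x : ℝ, |x| < r → Summable (fun n => d n * x ^ n)) :
    StrictAntiOn (fun x => (∑' n : ℕ, c n * x ^ n) / (∑' n : ℕ, d n * x ^ n))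
      (Set.Ioo 0 r) := by
  intro x ⟨hx, hxr⟩ y ⟨hy, hyr⟩ hxy
  rw [← abs_of_pos hx] at hxr
  rw [← abs_of_pos hy] at hyr
  have hg_pos : ∀ z, 0 < z → |z| < r → 0 < ∑' n, d n * z ^ n := fun z hz hzr =>
    (hg z hzr).tsum_pos (fun n => mul_nonneg (hd n).le (pow_nonneg hz.le n)) 0 (by simpa using hd 0)
  rw [div_lt_div_iff₀ (hg_pos y hy hyr) (hg_pos x hx hxr)]
  exact tsum_mul_tsum_lt_of_strictAnti_div hd hmono hx hxy
    (hf x hxr) (hf y hyr) (hg x hxr) (hg y hyr)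

theorem stmt_5 (c d : ℕ → ℝ) (r : ℝ) (hr : 0 < r)
    (hd : ∀ n, 0 < d n)
    (hmono : StrictAnti (fun n => c n / d n))
    (hf : ∀ x : ℝ, |x| < r → Summable (fun n => c n * x ^ n))
    (hg : ∀ x : ℝ, |x| < r → Summable (fun n => d n * x ^ n)) :
    StrictAntiOn (fun x => (∑' n : ℕ, c n * x ^ n) / (∑' n : ℕ, d n * x ^ n))
      (Set.Ioo 0 r) :=
  stmt_5_general c d r hd hmono hf hg
end

section
/- Let (c_n), (d_n) be real sequences with d_n > 0, and suppose there is n_0 such that c_n/d_n is strictly increasing for n ≤ n_0 and strictly decreasing for n > n_0. If f(x)=Σ c_n x^n and g(x)=Σ d_n x^n have radius of convergence r > 0, then there exists x_0 ∈ (0,r) such that h = f/g is strictly increasing on (0,x_0) and strictly decreasing on (x_0,r), OR h is monotone on all of (0,r). -/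
/-!
Write `h = f / g`, fix `x < y` with `h y ≤ h x`, and put `t = h y`, `e n = c n - t d n`. As
`c n / d n` is unimodal, the indices with `e n > 0` form an interval, and `φ w = ∑ e n w ^ n`
vanishes at `y` with `φ x ≥ 0`. Dividing `φ` by `1 - w / y` leaves a power series whose
coefficients, the partial sums of `e n y ^ n`, change sign at most once, from negative to positive.
For such a series `ψ` and the index `P` of the sign change, `ψ w / w ^ P` is increasing, so
`ψ (x / y) ≥ 0` forces `ψ (z / y) > 0`, hence `φ z < 0`, i.e. `h z < h y`, for every `z > y`. So
once `h` fails to increase it decreases strictly, which gives the trichotomy.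
-/

open Finset

lemma ordConnected_setOf_lt_of_unimodal {q : ℕ → ℝ} {n₀ : ℕ}
    (hinc : ∀ m n : ℕ, m < n → n ≤ n₀ → q m < q n)
    (hdec : ∀ m n : ℕ, n₀ < m → m < n → q n < q m) (t : ℝ) :
    Set.OrdConnected {n | t < q n} := by
  refine ⟨fun k (hk : t < q k) j (hj : t < q j) m ⟨hkm, hmj⟩ => ?_⟩
  rcases hkm.eq_or_lt with rfl | hkm
  · exact hk
  rcases hmj.eq_or_lt with rfl | hmj
  · exact hj
  rcases le_or_gt m n₀ with hm | hm
  · exact hk.trans (hinc k m hkm hm)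
  · exact hj.trans (hdec m j hm hmj)

lemma partialSum_nonneg_of_partialSum_pos {a : ℕ → ℝ} (ha : HasSum a 0)
    (hpos : Set.OrdConnected {n | 0 < a n}) {m n : ℕ} (hmn : m ≤ n)
    (hm : 0 < ∑ k ∈ range (m + 1), a k) : 0 ≤ ∑ k ∈ range (n + 1), a k := by
  by_contra! hn
  obtain ⟨k, hkm, hk⟩ : ∃ k ≤ m, 0 < a k := by
    by_contra! h
    exact hm.not_ge (sum_nonpos fun k hk => h k (Nat.lt_succ_iff.mp (mem_range.mp hk)))
  obtain ⟨j, hnj, hj⟩ : ∃ j > n, 0 < a j := by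
    by_contra! h
    have htail : ∑' i, a (i + (n + 1)) ≤ 0 := tsum_nonpos fun i => h _ (by omega)
    have hsplit := ha.summable.sum_add_tsum_nat_add (n + 1)
    rw [ha.tsum_eq] at hsplit
    linarith
  have hmono : ∑ i ∈ range (m + 1), a i ≤ ∑ i ∈ range (n + 1), a i :=
    sum_le_sum_of_subset_of_nonneg (range_subset_range.mpr (by omega)) fun i hi hi' =>
      (hpos.out hk hj ⟨by simp at hi'; omega, by simp at hi; omega⟩).le
  linarith

lemma pow_mul_pow_lt_pow_mul_pow_s6 {u v : ℝ} (hu : 0 < u) (huv : u < v) {m n : ℕ} (hmn : m < n) :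
    u ^ n * v ^ m < u ^ m * v ^ n := by
  obtain ⟨k, rfl⟩ := Nat.exists_eq_add_of_lt hmn
  have hv : 0 < v := hu.trans huv
  have hk : u ^ (k + 1) < v ^ (k + 1) := pow_lt_pow_left₀ huv hu.le (by omega)
  calc u ^ (m + k + 1) * v ^ m = u ^ m * v ^ m * u ^ (k + 1) := by ring
    _ < u ^ m * v ^ m * v ^ (k + 1) := by gcongr
    _ = u ^ m * v ^ (m + k + 1) := by ring

lemma sign_change_term_lt {u v s : ℝ} (hu : 0 < u) (huv : u < v) {n P : ℕ}
    (hneg : n < P → s < 0) (hpos : P < n → 0 < s) (hnP : n ≠ P) :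
    v ^ P * (s * u ^ n) < u ^ P * (s * v ^ n) := by
  rcases hnP.lt_or_gt with h | h
  · have := pow_mul_pow_lt_pow_mul_pow_s6 hu huv h
    nlinarith [hneg h]
  · have := pow_mul_pow_lt_pow_mul_pow_s6 hu huv h
    nlinarith [hpos h]

lemma tsum_mul_pow_lt_of_sign_change {S : ℕ → ℝ} {P : ℕ}
    (hneg : ∀ n < P, S n ≤ 0) (hpos : ∀ n, P ≤ n → 0 ≤ S n) {u v : ℝ} (hu : 0 < u) (huv : u < v)
    (hSu : Summable fun n => S n * u ^ n) (hSv : Summable fun n => S n * v ^ n)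
    {m : ℕ} (hmP : m ≠ P) (hm : S m ≠ 0) :
    v ^ P * ∑' n, S n * u ^ n < u ^ P * ∑' n, S n * v ^ n := by
  have hterm : ∀ n, n ≠ P → S n ≠ 0 → v ^ P * (S n * u ^ n) < u ^ P * (S n * v ^ n) :=
    fun n hnP hn => sign_change_term_lt hu huv (fun h => (hneg n h).lt_of_ne hn)
      (fun h => (hpos n h.le).lt_of_ne' hn) hnP
  rw [← tsum_mul_left, ← tsum_mul_left]
  refine Summable.tsum_lt_tsum (fun n => ?_) (hterm m hmP hm) (hSu.mul_left _) (hSv.mul_left _)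
  rcases eq_or_ne n P with rfl | hnP
  · exact le_of_eq (by ring)
  rcases eq_or_ne (S n) 0 with hn | hn
  · simp [hn]
  · exact (hterm n hnP hn).le

lemma tsum_mul_pow_pos_of_sign_change {S : ℕ → ℝ}
    (hS : ∀ m n, m ≤ n → 0 < S m → 0 ≤ S n) (hS0 : ∃ n, S n ≠ 0) {u v : ℝ} (hu : 0 < u)
    (huv : u < v) (hSu : Summable fun n => S n * u ^ n) (hSv : Summable fun n => S n * v ^ n)
    (h : 0 ≤ ∑' n, S n * u ^ n) : 0 < ∑' n, S n * v ^ n := by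
  classical
  have hv : 0 < v := hu.trans huv
  by_cases hP : ∃ n, 0 < S n
  swap
  · push Not at hP
    obtain ⟨m, hm⟩ := hS0
    have : ∑' n, S n * u ^ n < ∑' _ : ℕ, (0 : ℝ) :=
      Summable.tsum_lt_tsum (fun n => mul_nonpos_of_nonpos_of_nonneg (hP n) (by positivity))
        (mul_neg_of_neg_of_pos ((hP m).lt_of_ne hm) (by positivity)) hSu summable_zero
    simp only [tsum_zero] at this
    linarith
  set P := Nat.find hP
  have hSP : 0 < S P := Nat.find_spec hP
  by_cases hsingle : ∃ m ≠ P, S m ≠ 0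
  · obtain ⟨m, hmP, hm⟩ := hsingle
    have hlt := tsum_mul_pow_lt_of_sign_change (fun n hn => not_lt.mp (Nat.find_min hP hn))
      (fun n hn => hS P n hn hSP) hu huv hSu hSv hmP hm
    have : 0 < u ^ P * ∑' n, S n * v ^ n := lt_of_le_of_lt (by positivity) hlt
    exact pos_of_mul_pos_right this (by positivity)
  · push Not at hsingle
    rw [tsum_eq_single P fun n hn => by rw [hsingle n hn, zero_mul]]
    positivity

lemma hasSum_mul_pow_of_hasSum_partialSum {a : ℕ → ℝ} {u A : ℝ}
    (h : HasSum (fun n => (∑ k ∈ range (n + 1), a k) * u ^ n) A) :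
    HasSum (fun n => a n * u ^ n) ((1 - u) * A) := by
  have hshift := ((hasSum_nat_add_iff' 1).mpr h).sub (h.mul_left u)
  refine (hasSum_nat_add_iff' 1).mp ?_
  convert hshift using 1
  · ext n
    rw [sum_range_succ _ (n + 1)]
    ring
  · simp only [range_one, sum_singleton, zero_add, pow_zero]
    ring

lemma summable_partialSum_mul_pow {a : ℕ → ℝ} (ha : HasSum a 0) {ρ u : ℝ} (hρ : 1 ≤ ρ)
    (haρ : Summable fun n => |a n| * ρ ^ n) (hu : 0 ≤ u) (huρ : u < ρ) :
    Summable fun n => (∑ k ∈ range (n + 1), a k) * u ^ n := by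
  have hρ0 : 0 < ρ := one_pos.trans_le hρ
  have habs : Summable fun n => |a n| :=
    haρ.of_nonneg_of_le (fun n => abs_nonneg _) fun n => le_mul_of_one_le_right (abs_nonneg _)
      (one_le_pow₀ hρ)
  set C := ∑' n, |a n| * ρ ^ n
  have hbound : ∀ n, |∑ k ∈ range (n + 1), a k| * ρ ^ n ≤ C := by
    intro n
    have hsplit := ha.summable.sum_add_tsum_nat_add (n + 1)
    rw [ha.tsum_eq, ← eq_neg_iff_add_eq_zero] at hsplit
    have htail := haρ.sum_add_tsum_nat_add (n + 1)
    have hhead : 0 ≤ ∑ i ∈ range (n + 1), |a i| * ρ ^ i := by positivity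
    have htailρ : Summable fun i => |a (i + (n + 1))| * ρ ^ (i + (n + 1)) :=
      (summable_nat_add_iff (f := fun i => |a i| * ρ ^ i) (n + 1)).mpr haρ
    calc |∑ k ∈ range (n + 1), a k| * ρ ^ n
        ≤ (∑' i, |a (i + (n + 1))|) * ρ ^ n := by
          rw [hsplit, abs_neg]
          gcongr
          simpa only [Real.norm_eq_abs] using norm_tsum_le_tsum_norm (f := fun i => a (i + (n + 1)))
            ((summable_nat_add_iff (f := fun i => ‖a i‖) (n + 1)).mpr habs)
      _ = ∑' i, |a (i + (n + 1))| * ρ ^ n := tsum_mul_right.symm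
      _ ≤ ∑' i, |a (i + (n + 1))| * ρ ^ (i + (n + 1)) :=
          Summable.tsum_le_tsum
            (fun i => mul_le_mul_of_nonneg_left (pow_le_pow_right₀ hρ (by omega)) (abs_nonneg _))
            (((summable_nat_add_iff (f := fun i => |a i|) (n + 1)).mpr habs).mul_right _) htailρ
      _ ≤ C := by linarith
  refine Summable.of_norm_bounded ((summable_geometric_of_lt_one (by positivity)
    ((div_lt_one hρ0).mpr huρ)).mul_left C) fun n => ?_
  rw [Real.norm_eq_abs, abs_mul, abs_of_nonneg (pow_nonneg hu n), div_pow]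
  calc |∑ k ∈ range (n + 1), a k| * u ^ n
      = |∑ k ∈ range (n + 1), a k| * ρ ^ n * (u ^ n / ρ ^ n) := by field_simp
    _ ≤ C * (u ^ n / ρ ^ n) := by gcongr; exact hbound n

lemma tsum_mul_pow_neg_of_hasSum_zero {e : ℕ → ℝ} (he : HasSum e 0)
    (hpos : Set.OrdConnected {n | 0 < e n}) (hne : ∃ n, e n ≠ 0) {x z ρ : ℝ} (hx : 0 < x)
    (hx1 : x < 1) (hz1 : 1 < z) (hzρ : z < ρ) (heρ : Summable fun n => |e n| * ρ ^ n)
    (h : 0 ≤ ∑' n, e n * x ^ n) : ∑' n, e n * z ^ n < 0 := by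
  set S := fun n => ∑ k ∈ range (n + 1), e k
  have hSsum : ∀ w, 0 ≤ w → w < ρ → Summable fun n => S n * w ^ n :=
    fun w hw hwρ => summable_partialSum_mul_pow he (by linarith) heρ hw hwρ
  have hfactor : ∀ w, 0 ≤ w → w < ρ → ∑' n, e n * w ^ n = (1 - w) * ∑' n, S n * w ^ n :=
    fun w hw hwρ => (hasSum_mul_pow_of_hasSum_partialSum (hSsum w hw hwρ).hasSum).tsum_eq
  have hS0 : ∃ n, S n ≠ 0 := by
    obtain ⟨n, hn⟩ := hne
    by_contra! hS
    cases n with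
    | zero => exact hn (by simpa [S] using hS 0)
    | succ n => exact hn (by simpa [S, sum_range_succ _ (n + 1), hS n] using hS (n + 1))
  have hSx : 0 ≤ ∑' n, S n * x ^ n := by
    rw [hfactor x hx.le (by linarith)] at h
    exact nonneg_of_mul_nonneg_right h (by linarith)
  have hSz : 0 < ∑' n, S n * z ^ n :=
    tsum_mul_pow_pos_of_sign_change (fun _ _ => partialSum_nonneg_of_partialSum_pos he hpos)
      hS0 hx (by linarith) (hSsum x hx.le (by linarith)) (hSsum z (by linarith) hzρ) hSx
  rw [hfactor z (by linarith) hzρ]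
  exact mul_neg_of_neg_of_pos (by linarith) hSz

noncomputable def powerSeriesRatio (c d : ℕ → ℝ) (x : ℝ) : ℝ :=
  (∑' n, c n * x ^ n) / (∑' n, d n * x ^ n)

lemma powerSeriesRatio_lt_of_le {c d : ℕ → ℝ} {r : ℝ} (hd : ∀ n, 0 < d n) {n₀ : ℕ}
    (hinc : ∀ m n : ℕ, m < n → n ≤ n₀ → c m / d m < c n / d n)
    (hdec : ∀ m n : ℕ, n₀ < m → m < n → c n / d n < c m / d m)
    (hf : ∀ x : ℝ, |x| < r → Summable (fun n => c n * x ^ n))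
    (hg : ∀ x : ℝ, |x| < r → Summable (fun n => d n * x ^ n))
    {x y z : ℝ} (hx : 0 < x) (hxy : x < y) (hyz : y < z) (hzr : z < r)
    (hle : powerSeriesRatio c d y ≤ powerSeriesRatio c d x) :
    powerSeriesRatio c d z < powerSeriesRatio c d y := by
  have hy : 0 < y := hx.trans hxy
  have hgpos : ∀ w, 0 < w → w < r → 0 < ∑' n, d n * w ^ n := fun w hw hwr =>
    (hg w (by rwa [abs_of_pos hw])).tsum_pos (fun n => mul_nonneg (hd n).le (pow_nonneg hw.le n))
      0 (by simpa using hd 0)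
  set t := powerSeriesRatio c d y with ht
  -- rescaling by `y` moves the root of `∑ (c n - t d n) w ^ n` at `w = y` to `1`
  set e : ℕ → ℝ := fun n => (c n - t * d n) * y ^ n with he_def
  have hsum : ∀ w, 0 < w → w < r →
      HasSum (fun n => e n * (w / y) ^ n) (∑' n, c n * w ^ n - t * ∑' n, d n * w ^ n) := by
    intro w hw hwr
    have habs : |w| < r := by rwa [abs_of_pos hw]
    refine ((hf w habs).hasSum.sub ((hg w habs).hasSum.mul_left t)).congr_fun fun n => ?_
    rw [he_def, div_pow]
    field_simp
  have he : HasSum e 0 := by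
    have hroot : ∑' n, c n * y ^ n - t * ∑' n, d n * y ^ n = 0 := by
      rw [ht, powerSeriesRatio, div_mul_cancel₀ _ (hgpos y hy (hyz.trans hzr)).ne', sub_self]
    simpa only [div_self hy.ne', one_pow, mul_one, hroot] using hsum y hy (hyz.trans hzr)
  have hpos : Set.OrdConnected {n | 0 < e n} := by
    convert ordConnected_setOf_lt_of_unimodal (q := fun n => c n / d n) hinc hdec t using 3 with n
    rw [lt_div_iff₀ (hd n), mul_pos_iff_of_pos_right (pow_pos hy n), sub_pos]
  have hne : ∃ n, e n ≠ 0 := by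
    by_contra! h0
    have hq : ∀ n, c n / d n = t := fun n => by
      have := (mul_eq_zero.mp (h0 n)).resolve_right (pow_ne_zero _ hy.ne')
      rw [div_eq_iff (hd n).ne']
      linarith
    exact (hdec (n₀ + 1) (n₀ + 2) (by omega) (by omega)).ne (by rw [hq, hq])
  obtain ⟨w, hzw, hwr⟩ := exists_between hzr
  have heρ : Summable fun n => |e n| * (w / y) ^ n := by
    refine (summable_abs_iff.mpr (hsum w (by linarith) (by linarith)).summable).congr fun n => ?_
    rw [abs_mul, abs_of_pos (pow_pos (div_pos (by linarith) hy) n)]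
  have hx' : 0 ≤ ∑' n, e n * (x / y) ^ n := by
    rw [(hsum x hx (by linarith)).tsum_eq, sub_nonneg, ← le_div_iff₀ (hgpos x hx (by linarith))]
    exact hle
  have hz' := tsum_mul_pow_neg_of_hasSum_zero he hpos hne (div_pos hx hy) ((div_lt_one hy).mpr hxy)
    ((one_lt_div hy).mpr hyz) (div_lt_div_of_pos_right (by linarith) hy) heρ hx'
  rwa [(hsum z (by linarith) hzr).tsum_eq, sub_neg,
    ← div_lt_iff₀ (hgpos z (by linarith) hzr)] at hz'

lemma exists_peak_or_strictMonoOn_or_strictAntiOn {h : ℝ → ℝ} {a b : ℝ}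
    (H : ∀ x y z, a < x → x < y → y < z → z < b → h y ≤ h x → h z < h y) :
    (∃ x₀ ∈ Set.Ioo a b, StrictMonoOn h (Set.Ioo a x₀) ∧ StrictAntiOn h (Set.Ioo x₀ b)) ∨
      StrictMonoOn h (Set.Ioo a b) ∨ StrictAntiOn h (Set.Ioo a b) := by
  -- the points of `(a, b)` at which `h` has stopped increasing
  set A := {y | a < y ∧ y < b ∧ ∃ x, a < x ∧ x < y ∧ h y ≤ h x}
  have hA_lt : ∀ y ∈ A, ∀ z, y < z → z < b → h z < h y :=
    fun y ⟨_, _, x, hax, hxy, hle⟩ z hyz hzb => H x y z hax hxy hyz hzb hle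
  have hA_mem : ∀ y ∈ A, ∀ z, y < z → z < b → z ∈ A :=
    fun y hy z hyz hzb => ⟨hy.1.trans hyz, hzb, y, hy.1, hyz, (hA_lt y hy z hyz hzb).le⟩
  have hmono : ∀ u v, a < u → u < v → v < b → v ∉ A → h u < h v :=
    fun u v hau huv hvb hv => not_le.mp fun hle => hv ⟨hau.trans huv, hvb, u, hau, huv, hle⟩
  rcases A.eq_empty_or_nonempty with hAe | hAne
  · exact Or.inr (Or.inl fun u hu v hv huv => hmono u v hu.1 huv hv.2 (hAe ▸ Set.notMem_empty v))
  have hbdd : BddBelow A := ⟨a, fun y hy => hy.1.le⟩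
  have hanti : ∀ u v, sInf A < u → u < v → v < b → h v < h u := fun u v hu huv hvb => by
    obtain ⟨y, hyA, hyu⟩ := exists_lt_of_csInf_lt hAne hu
    exact hA_lt u (hA_mem y hyA u hyu (huv.trans hvb)) v huv hvb
  rcases (le_csInf hAne fun y hy => hy.1.le).eq_or_lt with ha | ha
  · exact Or.inr (Or.inr fun u hu v hv huv => hanti u v (ha ▸ hu.1) huv hv.2)
  obtain ⟨y, hyA⟩ := hAne
  have hpeak_lt : sInf A < b := (csInf_le hbdd hyA).trans_lt hyA.2.1
  refine Or.inl ⟨sInf A, ⟨ha, hpeak_lt⟩, fun u hu v hv huv => ?_,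
    fun u hu v hv huv => hanti u v hu.1 huv hv.2⟩
  exact hmono u v hu.1 huv (hv.2.trans hpeak_lt) fun hvA => (csInf_le hbdd hvA).not_gt hv.2

theorem stmt_6_general (c d : ℕ → ℝ) (r : ℝ)
    (hd : ∀ n, 0 < d n)
    (n₀ : ℕ)
    (hinc : ∀ m n : ℕ, m < n → n ≤ n₀ → c m / d m < c n / d n)
    (hdec : ∀ m n : ℕ, n₀ < m → m < n → c n / d n < c m / d m)
    (hf : ∀ x : ℝ, |x| < r → Summable (fun n => c n * x ^ n))
    (hg : ∀ x : ℝ, |x| < r → Summable (fun n => d n * x ^ n)) :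
    (∃ x₀ ∈ Set.Ioo 0 r,
      StrictMonoOn (fun x => (∑' n : ℕ, c n * x ^ n) / (∑' n : ℕ, d n * x ^ n))
        (Set.Ioo 0 x₀) ∧
      StrictAntiOn (fun x => (∑' n : ℕ, c n * x ^ n) / (∑' n : ℕ, d n * x ^ n))
        (Set.Ioo x₀ r)) ∨
    StrictMonoOn (fun x => (∑' n : ℕ, c n * x ^ n) / (∑' n : ℕ, d n * x ^ n))
      (Set.Ioo 0 r) ∨
    StrictAntiOn (fun x => (∑' n : ℕ, c n * x ^ n) / (∑' n : ℕ, d n * x ^ n))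
      (Set.Ioo 0 r) :=
  exists_peak_or_strictMonoOn_or_strictAntiOn fun _ _ _ hx hxy hyz hzr hle =>
    powerSeriesRatio_lt_of_le hd hinc hdec hf hg hx hxy hyz hzr hle

theorem stmt_6 (c d : ℕ → ℝ) (r : ℝ) (hr : 0 < r)
    (hd : ∀ n, 0 < d n)
    (n₀ : ℕ)
    (hinc : ∀ m n : ℕ, m < n → n ≤ n₀ → c m / d m < c n / d n)
    (hdec : ∀ m n : ℕ, n₀ < m → m < n → c n / d n < c m / d m)
    (hf : ∀ x : ℝ, |x| < r → Summable (fun n => c n * x ^ n))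
    (hg : ∀ x : ℝ, |x| < r → Summable (fun n => d n * x ^ n)) :
    (∃ x₀ ∈ Set.Ioo 0 r,
      StrictMonoOn (fun x => (∑' n : ℕ, c n * x ^ n) / (∑' n : ℕ, d n * x ^ n))
        (Set.Ioo 0 x₀) ∧
      StrictAntiOn (fun x => (∑' n : ℕ, c n * x ^ n) / (∑' n : ℕ, d n * x ^ n))
        (Set.Ioo x₀ r)) ∨
    StrictMonoOn (fun x => (∑' n : ℕ, c n * x ^ n) / (∑' n : ℕ, d n * x ^ n))
      (Set.Ioo 0 r) ∨
    StrictAntiOn (fun x => (∑' n : ℕ, c n * x ^ n) / (∑' n : ℕ, d n * x ^ n))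
      (Set.Ioo 0 r) :=
  stmt_6_general c d r hd n₀ hinc hdec hf hg
end

section
/- Let a,b > 0 with a+b ≥ 1 and ab - (2/9)(a+b) ≥ 0, (a,b) ∉ {(1/3,2/3),(2/3,1/3)}. Then the function r ↦ F(a,b;a+b+1;r)/F(1/3,2/3;2;r) is strictly increasing on (0,1). -/
/-!
Biernacki–Krzyż: if `A n / B n` is increasing and not constant, then
`(∑ A n xⁿ) / (∑ B n xⁿ)` is strictly increasing, because symmetrizing the double series for
`f x * g y - f y * g x` gives `½ ∑ₖₗ (A k B l - A l B k) (xᵏ yˡ - xˡ yᵏ)`, a sum of nonpositive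
terms. For the two hypergeometric series, comparing consecutive coefficient ratios reduces to
the sign of a polynomial in `n` whose coefficients are nonnegative combinations of
`ab - 2(a + b)/9` and `a + b - 1`; it vanishes identically only at the two excluded points.
-/

/-- The Gaussian hypergeometric function `F(a,b;c;x)` as a power series sum. -/
noncomputable def hyperF (a b c x : ℝ) : ℝ :=
  ∑' n : ℕ, ((ascPochhammer ℝ n).eval a * (ascPochhammer ℝ n).eval b /
    ((ascPochhammer ℝ n).eval c * (Nat.factorial n : ℝ))) * x ^ n

open Set

section PowerSeriesRatio

variable {A B : ℕ → ℝ}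

lemma cross_le_of_cross_le_succ (hB : ∀ n, 0 < B n)
    (h : ∀ n, A n * B (n + 1) ≤ A (n + 1) * B n) {k l : ℕ} (hkl : k ≤ l) :
    A k * B l ≤ A l * B k := by
  have hmono : Monotone fun n => A n / B n :=
    monotone_nat_of_le_succ fun n => (div_le_div_iff₀ (hB n) (hB (n + 1))).2 (h n)
  exact (div_le_div_iff₀ (hB k) (hB l)).1 (hmono hkl)

lemma pow_mul_pow_le_pow_mul_pow {x y : ℝ} (hx : 0 ≤ x) (hxy : x ≤ y) {k l : ℕ}
    (hkl : k ≤ l) : x ^ l * y ^ k ≤ x ^ k * y ^ l := by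
  obtain ⟨d, rfl⟩ := Nat.exists_eq_add_of_le hkl
  have hy : 0 ≤ y := hx.trans hxy
  calc x ^ (k + d) * y ^ k = x ^ k * y ^ k * x ^ d := by ring
    _ ≤ x ^ k * y ^ k * y ^ d := by gcongr
    _ = x ^ k * y ^ (k + d) := by ring

lemma pow_mul_pow_lt_pow_mul_pow_s10 {x y : ℝ} (hx : 0 < x) (hxy : x < y) {k l : ℕ}
    (hkl : k < l) : x ^ l * y ^ k < x ^ k * y ^ l := by
  obtain ⟨d, rfl⟩ := Nat.exists_eq_add_of_lt hkl
  have hy : 0 < y := hx.trans hxy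
  calc x ^ (k + d + 1) * y ^ k = x ^ k * y ^ k * x ^ (d + 1) := by ring
    _ < x ^ k * y ^ k * y ^ (d + 1) := by gcongr
    _ = x ^ k * y ^ (k + d + 1) := by ring

lemma cross_mul_cross_nonpos (hmono : ∀ ⦃k l⦄, k ≤ l → A k * B l ≤ A l * B k)
    {x y : ℝ} (hx : 0 ≤ x) (hxy : x ≤ y) (k l : ℕ) :
    (A k * B l - A l * B k) * (x ^ k * y ^ l - x ^ l * y ^ k) ≤ 0 := by
  rcases le_total k l with hkl | hlk
  · exact mul_nonpos_of_nonpos_of_nonneg (sub_nonpos.2 (hmono hkl))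
      (sub_nonneg.2 (pow_mul_pow_le_pow_mul_pow hx hxy hkl))
  · exact mul_nonpos_of_nonneg_of_nonpos (sub_nonneg.2 (hmono hlk))
      (sub_nonpos.2 (pow_mul_pow_le_pow_mul_pow hx hxy hlk))

theorem tsum_mul_tsum_lt_tsum_mul_tsum (hA : ∀ n, 0 ≤ A n) (hB : ∀ n, 0 ≤ B n)
    (hmono : ∀ ⦃k l⦄, k ≤ l → A k * B l ≤ A l * B k) {i j : ℕ} (hij : i < j)
    (hstrict : A i * B j < A j * B i) {x y : ℝ} (hx : 0 < x) (hxy : x < y)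
    (hAx : Summable fun n => A n * x ^ n) (hAy : Summable fun n => A n * y ^ n)
    (hBx : Summable fun n => B n * x ^ n) (hBy : Summable fun n => B n * y ^ n) :
    (∑' n, A n * x ^ n) * ∑' n, B n * y ^ n < (∑' n, A n * y ^ n) * ∑' n, B n * x ^ n := by
  have hy : 0 < y := hx.trans hxy
  have hxy_sum : Summable fun p : ℕ × ℕ => A p.1 * x ^ p.1 * (B p.2 * y ^ p.2) :=
    hAx.mul_of_nonneg hBy (fun n => by have := hA n; positivity)
      (fun n => by have := hB n; positivity)
  have hyx_sum : Summable fun p : ℕ × ℕ => A p.1 * y ^ p.1 * (B p.2 * x ^ p.2) :=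
    hAy.mul_of_nonneg hBx (fun n => by have := hA n; positivity)
      (fun n => by have := hB n; positivity)
  set D : ℕ × ℕ → ℝ := fun p => A p.1 * x ^ p.1 * (B p.2 * y ^ p.2) -
    A p.1 * y ^ p.1 * (B p.2 * x ^ p.2) with hD
  have hD_sum : Summable D := hxy_sum.sub hyx_sum
  have hD_swap_sum : Summable fun p : ℕ × ℕ => D p.swap := hD_sum.prod_symm
  -- symmetrizing `D` under `(k, l) ↦ (l, k)` makes every term nonpositive
  have hD_symm : ∀ p : ℕ × ℕ, D p + D p.swap =
      (A p.1 * B p.2 - A p.2 * B p.1) * (x ^ p.1 * y ^ p.2 - x ^ p.2 * y ^ p.1) := by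
    intro p; simp only [hD, Prod.fst_swap, Prod.snd_swap]; ring
  have hD_neg : ∑' p, (D p + D p.swap) < 0 := by
    rw [← tsum_zero (α := ℝ) (β := ℕ × ℕ)]
    refine Summable.tsum_lt_tsum (i := (i, j)) (fun p => ?_) ?_
      (hD_sum.add hD_swap_sum) summable_zero
    · rw [hD_symm]; exact cross_mul_cross_nonpos hmono hx.le hxy.le p.1 p.2
    · rw [hD_symm]
      exact mul_neg_of_neg_of_pos (sub_neg.2 hstrict)
        (sub_pos.2 (pow_mul_pow_lt_pow_mul_pow_s10 hx hxy hij))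
  have hswap : ∑' p : ℕ × ℕ, D p.swap = ∑' p, D p := (Equiv.prodComm ℕ ℕ).tsum_eq D
  rw [hD_sum.tsum_add hD_swap_sum, hswap, hD,
    hxy_sum.tsum_sub hyx_sum, ← hAx.tsum_mul_tsum hBy hxy_sum,
    ← hAy.tsum_mul_tsum hBx hyx_sum] at hD_neg
  linarith

theorem strictMonoOn_tsum_div_tsum (hA : ∀ n, 0 ≤ A n) (hB : ∀ n, 0 ≤ B n)
    (hmono : ∀ ⦃k l⦄, k ≤ l → A k * B l ≤ A l * B k) {i j : ℕ} (hij : i < j)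
    (hstrict : A i * B j < A j * B i) {r : ℝ}
    (hAs : ∀ x ∈ Ioo 0 r, Summable fun n => A n * x ^ n)
    (hBs : ∀ x ∈ Ioo 0 r, Summable fun n => B n * x ^ n) :
    StrictMonoOn (fun x => (∑' n, A n * x ^ n) / ∑' n, B n * x ^ n) (Ioo 0 r) := by
  have hBi : 0 < B i :=
    pos_of_mul_pos_right ((mul_nonneg (hA i) (hB j)).trans_lt hstrict) (hA j)
  have hden : ∀ x ∈ Ioo 0 r, 0 < ∑' n, B n * x ^ n := fun x hx =>
    (hBs x hx).tsum_pos (fun n => mul_nonneg (hB n) (pow_nonneg hx.1.le n)) i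
      (mul_pos hBi (pow_pos hx.1 i))
  intro x hx y hy hxy
  rw [div_lt_div_iff₀ (hden x hx) (hden y hy)]
  exact tsum_mul_tsum_lt_tsum_mul_tsum hA hB hmono hij hstrict hx.1 hxy (hAs x hx) (hAs y hy)
    (hBs x hx) (hBs y hy)

end PowerSeriesRatio

noncomputable def hyperCoeff (a b c : ℝ) (n : ℕ) : ℝ :=
  (ascPochhammer ℝ n).eval a * (ascPochhammer ℝ n).eval b /
    ((ascPochhammer ℝ n).eval c * (n.factorial : ℝ))

section HyperCoeff

variable {a b c : ℝ}

lemma hyperCoeff_pos (ha : 0 < a) (hb : 0 < b) (hc : 0 < c) (n : ℕ) : 0 < hyperCoeff a b c n :=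
  div_pos (mul_pos (ascPochhammer_pos n a ha) (ascPochhammer_pos n b hb))
    (mul_pos (ascPochhammer_pos n c hc) (mod_cast n.factorial_pos))

lemma hyperCoeff_succ (hc : 0 < c) (n : ℕ) :
    hyperCoeff a b c (n + 1) =
      hyperCoeff a b c n * ((a + n) * (b + n)) / ((c + n) * (n + 1)) := by
  have := (ascPochhammer_pos n c hc).ne'
  have : (n.factorial : ℝ) ≠ 0 := mod_cast n.factorial_ne_zero
  have : c + n ≠ 0 := by positivity
  simp only [hyperCoeff, ascPochhammer_succ_eval, Nat.factorial_succ, Nat.cast_mul,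
    Nat.cast_succ]
  field_simp

lemma hyperCoeff_succ_mul_sub_mul_succ {a' b' c' : ℝ} (hc : 0 < c) (hc' : 0 < c') (n : ℕ) :
    hyperCoeff a b c (n + 1) * hyperCoeff a' b' c' n -
        hyperCoeff a b c n * hyperCoeff a' b' c' (n + 1) =
      hyperCoeff a b c n * hyperCoeff a' b' c' n *
        ((a + n) * (b + n) * (c' + n) - (a' + n) * (b' + n) * (c + n)) /
          ((c + n) * (c' + n) * (n + 1)) := by
  have : c + n ≠ 0 := by positivity
  have : c' + n ≠ 0 := by positivity
  rw [hyperCoeff_succ hc, hyperCoeff_succ hc']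
  field_simp

lemma summable_hyperCoeff_mul_pow (ha : 0 < a) (hb : 0 < b) (hc : 0 < c) {x : ℝ}
    (hx : |x| < 1) :
    Summable fun n => hyperCoeff a b c n * x ^ n := by
  have hrad := ordinaryHypergeometricSeries_radius_eq_one (𝔸 := ℝ) a b c fun k =>
    ⟨((neg_neg_of_pos ha).trans_le k.cast_nonneg).ne',
      ((neg_neg_of_pos hb).trans_le k.cast_nonneg).ne',
      ((neg_neg_of_pos hc).trans_le k.cast_nonneg).ne'⟩
  have := (ordinaryHypergeometricSeries ℝ a b c).summable (x := x)
    (by simpa [hrad, ← ofReal_norm] using hx)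
  rw [ordinaryHypergeometricSeries_apply_eq'] at this
  refine this.congr fun n => ?_
  rw [smul_eq_mul, hyperCoeff]
  ring

end HyperCoeff

section ThirdTwoThirds

variable {a b : ℝ}

lemma hyperCoeff_cross_succ_le (ha : 0 < a) (hb : 0 < b) (h1 : 1 ≤ a + b)
    (h2 : 0 ≤ a * b - (2/9) * (a + b)) (n : ℕ) :
    hyperCoeff a b (a + b + 1) n * hyperCoeff (1/3) (2/3) 2 (n + 1) ≤
      hyperCoeff a b (a + b + 1) (n + 1) * hyperCoeff (1/3) (2/3) 2 n := by
  have hc : 0 < a + b + 1 := by linarith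
  rw [← sub_nonneg, hyperCoeff_succ_mul_sub_mul_succ hc two_pos]
  -- with `s = a + b`, `d = ab - 2s/9`, the cubic below is `2d + 2(s-1)/9 + n (d + 11(s-1)/9)`
  have hcubic : 0 ≤ (a + n) * (b + n) * (2 + n) - (1/3 + n) * (2/3 + n) * (a + b + 1 + n) := by
    nlinarith [mul_nonneg n.cast_nonneg
      (show 0 ≤ a * b - (2/9) * (a + b) + (11/9) * (a + b - 1) by linarith)]
  have := hyperCoeff_pos ha hb hc n
  have := hyperCoeff_pos (a := 1/3) (b := 2/3) (by norm_num) (by norm_num) two_pos n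
  positivity

lemma hyperCoeff_cross_zero_one_lt (ha : 0 < a) (hb : 0 < b) (h1 : 1 ≤ a + b)
    (h2 : 0 ≤ a * b - (2/9) * (a + b))
    (hne : (a, b) ∉ ({(1/3, 2/3), (2/3, 1/3)} : Set (ℝ × ℝ))) :
    hyperCoeff a b (a + b + 1) 0 * hyperCoeff (1/3) (2/3) 2 1 <
      hyperCoeff a b (a + b + 1) 1 * hyperCoeff (1/3) (2/3) 2 0 := by
  have hc : 0 < a + b + 1 := by linarith
  rw [← sub_pos, hyperCoeff_succ_mul_sub_mul_succ hc two_pos]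
  have hquad : 1/3 * (2/3) * (a + b + 1) < a * b * 2 := by
    by_contra! hle
    have hs : a + b = 1 := by linarith
    have hp : a * b = 2/9 := by linarith
    have hroots : (3 * a - 1) * (3 * a - 2) = 0 := by linear_combination (9 * a) * hs - 9 * hp
    rcases mul_eq_zero.1 hroots with h | h
    · exact hne (by simp [show a = 1/3 by linarith, show b = 2/3 by linarith])
    · exact hne (by simp [show a = 2/3 by linarith, show b = 1/3 by linarith])
  have := hyperCoeff_pos ha hb hc 0
  have := hyperCoeff_pos (a := 1/3) (b := 2/3) (by norm_num) (by norm_num) two_pos 0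
  simp only [Nat.cast_zero, add_zero]
  have := sub_pos.2 hquad
  positivity

end ThirdTwoThirds

theorem stmt_10 (a b : ℝ) (ha : 0 < a) (hb : 0 < b)
    (h1 : 1 ≤ a + b) (h2 : 0 ≤ a * b - (2/9) * (a + b))
    (hne : (a, b) ∉ ({(1/3, 2/3), (2/3, 1/3)} : Set (ℝ × ℝ))) :
    StrictMonoOn (fun r => hyperF a b (a + b + 1) r / hyperF (1/3) (2/3) 2 r)
      (Set.Ioo (0:ℝ) 1) := by
  have hc : 0 < a + b + 1 := by linarith
  have hA := hyperCoeff_pos ha hb hc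
  have hB := hyperCoeff_pos (a := 1/3) (b := 2/3) (by norm_num) (by norm_num) two_pos
  have hsum {a b c : ℝ} (ha : 0 < a) (hb : 0 < b) (hc : 0 < c) (x : ℝ) (hx : x ∈ Ioo 0 1) :=
    summable_hyperCoeff_mul_pow ha hb hc (abs_lt.2 ⟨by linarith [hx.1], hx.2⟩)
  exact strictMonoOn_tsum_div_tsum (fun n => (hA n).le) (fun n => (hB n).le)
    (fun k l hkl => cross_le_of_cross_le_succ hB (hyperCoeff_cross_succ_le ha hb h1 h2) hkl)
    zero_lt_one (hyperCoeff_cross_zero_one_lt ha hb h1 h2 hne)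
    (hsum ha hb hc) (hsum (by norm_num) (by norm_num) two_pos)
end
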